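/- arXiv:1904.10344 — 2 statements merged into one kernel-verified Lean document; each statement's English description precedes it below -/
import Mathlib

section
/- Klein's inequality: for quantum states ρ, σ with σ positive definite, the quantum relative entropy D(ρ‖σ) = Tr(ρ(log ρ − log σ)) is nonnegative, with equality if and only if ρ = σ. -/
open Matrix ComplexOrder

/-- Matrix logarithm of a Hermitian matrix via its spectral decomposition
(junk value `0` for non-Hermitian input). -/
noncomputable def matLog {n : Type*} [Fintype n] [DecidableEq n]
    (A : Matrix n n ℂ) : Matrix n n ℂ :=
  if h : A.IsHermitian then
    (h.eigenvectorUnitary : Matrix n n ℂ) *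
      diagonal (fun i => (Real.log (h.eigenvalues i) : ℂ)) *
      star (h.eigenvectorUnitary : Matrix n n ℂ)
  else 0

/-- Quantum relative entropy `D(ρ‖σ) = Tr(ρ (log ρ − log σ))`. -/
noncomputable def relEnt {n : Type*} [Fintype n] [DecidableEq n]
    (ρ σ : Matrix n n ℂ) : ℝ :=
  ((ρ * (matLog ρ - matLog σ)).trace).re

/-!
Diagonalize `ρ = U diag(p) U*` and `σ = V diag(q) V*`. The overlaps `c i j = |(U* V) i j|²` form a
doubly stochastic matrix, so with `Tr ρ = Tr σ` the relative entropy becomes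
`D(ρ‖σ) = ∑ i j, c i j * q j * klFun (p i / q j)`, where `klFun x = x log x + 1 - x` is
nonnegative and vanishes only at `1`. Hence `D(ρ‖σ) ≥ 0`, and if `D(ρ‖σ) = 0` then `p i = q j`
whenever `(U* V) i j ≠ 0`, i.e. `U* V` intertwines `diag(p)` and `diag(q)`, which gives `ρ = σ`.
-/

open InformationTheory

namespace InformationTheory

lemma mul_klFun_div {x y : ℝ} (hy : y ≠ 0) :
    y * klFun (x / y) = x * Real.log x - x * Real.log y - x + y := by
  rcases eq_or_ne x 0 with rfl | hx
  · simp [klFun_apply]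
  · rw [klFun_apply, Real.log_div hx hy]
    field_simp
    ring

end InformationTheory

namespace Matrix

variable {n : Type*} [Fintype n] [DecidableEq n]

lemma map_normSq_mem_doublyStochastic {W : Matrix n n ℂ} (hW : W ∈ unitaryGroup n ℂ) :
    W.map Complex.normSq ∈ doublyStochastic ℝ n := by
  refine mem_doublyStochastic_iff_sum.2 ⟨fun i j => Complex.normSq_nonneg _, fun i => ?_,
    fun j => ?_⟩
  · have := congr_fun₂ (mem_unitaryGroup_iff.1 hW) i i
    simp only [mul_apply, star_apply, one_apply_eq, Complex.star_def, Complex.mul_conj] at this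
    exact_mod_cast this
  · have := congr_fun₂ (mem_unitaryGroup_iff'.1 hW) j j
    simp only [mul_apply, star_apply, one_apply_eq, Complex.star_def,
      ← Complex.normSq_eq_conj_mul_self] at this
    exact_mod_cast this

lemma trace_diagonal_mul_mul_diagonal_mul_star (W : Matrix n n ℂ) (f g : n → ℝ) :
    (diagonal (fun i => (f i : ℂ)) * W * diagonal (fun j => (g j : ℂ)) * star W).trace
      = ((∑ i, ∑ j, W.map Complex.normSq i j * (f i * g j) : ℝ) : ℂ) := by
  simp only [trace, diag_apply, mul_apply, star_apply, diagonal_apply, ite_mul, zero_mul,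
    mul_ite, mul_zero, Finset.sum_ite_eq, Finset.sum_ite_eq', Finset.mem_univ, if_true,
    map_apply]
  push_cast
  refine Finset.sum_congr rfl fun i _ => Finset.sum_congr rfl fun j _ => ?_
  rw [Complex.star_def, ← Complex.mul_conj]
  ring

lemma trace_conj_diagonal_mul_conj_diagonal (U V : Matrix n n ℂ) (f g : n → ℝ) :
    ((U * diagonal (fun i => (f i : ℂ)) * star U) *
      (V * diagonal (fun j => (g j : ℂ)) * star V)).trace
      = ((∑ i, ∑ j, (star U * V).map Complex.normSq i j * (f i * g j) : ℝ) : ℂ) := by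
  rw [← trace_diagonal_mul_mul_diagonal_mul_star, star_mul, star_star, Matrix.mul_assoc U,
    Matrix.mul_assoc U, trace_mul_comm U]
  simp only [Matrix.mul_assoc]

section DoublyStochastic

variable {R : Type*} [Semiring R] [PartialOrder R] [IsOrderedRing R] {M : Matrix n n R}

lemma sum_sum_mul_left_of_mem_doublyStochastic (hM : M ∈ doublyStochastic R n) (x : n → R) :
    ∑ i, ∑ j, M i j * x i = ∑ i, x i := by
  simp only [← Finset.sum_mul, sum_row_of_mem_doublyStochastic hM, one_mul]

lemma sum_sum_mul_right_of_mem_doublyStochastic (hM : M ∈ doublyStochastic R n) (x : n → R) :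
    ∑ i, ∑ j, M i j * x j = ∑ j, x j := by
  rw [Finset.sum_comm]
  simp only [← Finset.sum_mul, sum_col_of_mem_doublyStochastic hM, one_mul]

end DoublyStochastic

lemma conj_diagonal_eq_conj_diagonal {R : Type*} [CommRing R] [StarRing R]
    {U V : Matrix n n R} (hU : U ∈ unitaryGroup n R) (hV : V ∈ unitaryGroup n R) {f g : n → R}
    (h : ∀ i j, (star U * V) i j = 0 ∨ f i = g j) :
    U * diagonal f * star U = V * diagonal g * star V := by
  have hcomm : diagonal f * (star U * V) = star U * V * diagonal g := by
    ext i j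
    rw [diagonal_mul, mul_diagonal]
    rcases h i j with h | h <;> simp [h, mul_comm]
  calc U * diagonal f * star U = U * (diagonal f * (star U * V)) * star V := by
        simp only [Matrix.mul_assoc, mem_unitaryGroup_iff.1 hV, Matrix.mul_one]
    _ = U * star U * V * diagonal g * star V := by
        rw [hcomm]
        simp only [Matrix.mul_assoc]
    _ = V * diagonal g * star V := by
        rw [mem_unitaryGroup_iff.1 hU, Matrix.one_mul]

namespace IsHermitian

variable {A B : Matrix n n ℂ}

lemma eq_conj_diagonal (hA : A.IsHermitian) :
    A = (hA.eigenvectorUnitary : Matrix n n ℂ) * diagonal (fun i => (hA.eigenvalues i : ℂ)) *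
      star (hA.eigenvectorUnitary : Matrix n n ℂ) :=
  hA.spectral_theorem

lemma matLog_eq (hA : A.IsHermitian) :
    matLog A = (hA.eigenvectorUnitary : Matrix n n ℂ) *
      diagonal (fun i => (Real.log (hA.eigenvalues i) : ℂ)) *
      star (hA.eigenvectorUnitary : Matrix n n ℂ) :=
  dif_pos hA

noncomputable def eigenOverlap (hA : A.IsHermitian) (hB : B.IsHermitian) : Matrix n n ℝ :=
  (star (hA.eigenvectorUnitary : Matrix n n ℂ) * hB.eigenvectorUnitary).map Complex.normSq

lemma eigenOverlap_mem_doublyStochastic (hA : A.IsHermitian) (hB : B.IsHermitian) :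
    eigenOverlap hA hB ∈ doublyStochastic ℝ n :=
  map_normSq_mem_doublyStochastic (star hA.eigenvectorUnitary * hB.eigenvectorUnitary).prop

lemma eigenOverlap_self (hA : A.IsHermitian) : eigenOverlap hA hA = 1 := by
  rw [eigenOverlap, Unitary.star_mul_self_of_mem hA.eigenvectorUnitary.prop]
  exact Matrix.map_one _ Complex.normSq_zero Complex.normSq_one

lemma re_trace_mul_matLog (hA : A.IsHermitian) (hB : B.IsHermitian) :
    (A * matLog B).trace.re =
      ∑ i, ∑ j, eigenOverlap hA hB i j * (hA.eigenvalues i * Real.log (hB.eigenvalues j)) := by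
  have h := trace_conj_diagonal_mul_conj_diagonal (hA.eigenvectorUnitary : Matrix n n ℂ)
    hB.eigenvectorUnitary hA.eigenvalues (fun j => Real.log (hB.eigenvalues j))
  rw [← hA.eq_conj_diagonal, ← hB.matLog_eq] at h
  rw [h, Complex.ofReal_re, eigenOverlap]

end IsHermitian

end Matrix

section RelEnt

variable {n : Type*} [Fintype n] [DecidableEq n] {ρ σ : Matrix n n ℂ}

lemma relEnt_eq_sum_eigenOverlap_mul_klFun (hρ : ρ.IsHermitian) (hσ : σ.IsHermitian)
    (hq : ∀ j, hσ.eigenvalues j ≠ 0) (htr : ρ.trace = σ.trace) :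
    relEnt ρ σ = ∑ i, ∑ j, hρ.eigenOverlap hσ i j *
      (hσ.eigenvalues j * klFun (hρ.eigenvalues i / hσ.eigenvalues j)) := by
  have hsum : ∑ i, hρ.eigenvalues i = ∑ j, hσ.eigenvalues j := by
    exact_mod_cast
      hρ.trace_eq_sum_eigenvalues.symm.trans (htr.trans hσ.trace_eq_sum_eigenvalues)
  have hself :
      (ρ * matLog ρ).trace.re = ∑ i, hρ.eigenvalues i * Real.log (hρ.eigenvalues i) := by
    rw [hρ.re_trace_mul_matLog hρ, hρ.eigenOverlap_self]
    simp [one_apply]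
  have hc := hρ.eigenOverlap_mem_doublyStochastic hσ
  set p := hρ.eigenvalues
  set q := hσ.eigenvalues
  calc relEnt ρ σ = (ρ * matLog ρ).trace.re - (ρ * matLog σ).trace.re := by
        rw [relEnt, Matrix.mul_sub, trace_sub, Complex.sub_re]
    _ = ∑ i, ∑ j, hρ.eigenOverlap hσ i j *
          (p i * Real.log (p i) - p i * Real.log (q j) - p i + q j) := by
        simp only [hself, hρ.re_trace_mul_matLog hσ, mul_add, mul_sub, Finset.sum_add_distrib,
          Finset.sum_sub_distrib, sum_sum_mul_left_of_mem_doublyStochastic hc,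
          sum_sum_mul_right_of_mem_doublyStochastic hc, hsum]
        ring
    _ = _ := Finset.sum_congr rfl fun i _ => Finset.sum_congr rfl fun j _ => by
        rw [mul_klFun_div (hq j)]

lemma eigenOverlap_mul_klFun_nonneg (hρ : ρ.PosSemidef) (hσ : σ.PosDef) (i j : n) :
    0 ≤ hρ.1.eigenOverlap hσ.1 i j *
      (hσ.1.eigenvalues j * klFun (hρ.1.eigenvalues i / hσ.1.eigenvalues j)) :=
  mul_nonneg (nonneg_of_mem_doublyStochastic (hρ.1.eigenOverlap_mem_doublyStochastic hσ.1))
    (mul_nonneg (hσ.eigenvalues_pos j).le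
      (klFun_nonneg (div_nonneg (hρ.eigenvalues_nonneg i) (hσ.eigenvalues_pos j).le)))

lemma relEnt_nonneg (hρ : ρ.PosSemidef) (hσ : σ.PosDef) (htr : ρ.trace = σ.trace) :
    0 ≤ relEnt ρ σ := by
  rw [relEnt_eq_sum_eigenOverlap_mul_klFun hρ.1 hσ.1 (fun j => (hσ.eigenvalues_pos j).ne') htr]
  exact Finset.sum_nonneg fun i _ => Finset.sum_nonneg fun j _ =>
    eigenOverlap_mul_klFun_nonneg hρ hσ i j

lemma eq_of_relEnt_eq_zero (hρ : ρ.PosSemidef) (hσ : σ.PosDef) (htr : ρ.trace = σ.trace)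
    (h : relEnt ρ σ = 0) : ρ = σ := by
  have hq := hσ.eigenvalues_pos
  rw [relEnt_eq_sum_eigenOverlap_mul_klFun hρ.1 hσ.1 (fun j => (hq j).ne') htr,
    Finset.sum_eq_zero_iff_of_nonneg fun i _ => Finset.sum_nonneg fun j _ =>
      eigenOverlap_mul_klFun_nonneg hρ hσ i j] at h
  have hzero (i j : n) := (Finset.sum_eq_zero_iff_of_nonneg fun j _ =>
    eigenOverlap_mul_klFun_nonneg hρ hσ i j).1 (h i (Finset.mem_univ i)) j (Finset.mem_univ j)
  refine hρ.1.eq_conj_diagonal.trans (Eq.trans ?_ hσ.1.eq_conj_diagonal.symm)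
  refine conj_diagonal_eq_conj_diagonal hρ.1.eigenvectorUnitary.prop
    hσ.1.eigenvectorUnitary.prop fun i j => ?_
  rcases mul_eq_zero.1 (hzero i j) with hc | hkl
  · exact .inl (Complex.normSq_eq_zero.1 hc)
  · have hpq := (klFun_eq_zero_iff (div_nonneg (hρ.eigenvalues_nonneg i) (hq j).le)).1
      ((mul_eq_zero.1 hkl).resolve_left (hq j).ne')
    exact .inr (congrArg _ ((div_eq_one_iff_eq (hq j).ne').1 hpq))

lemma relEnt_self (ρ : Matrix n n ℂ) : relEnt ρ ρ = 0 := by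
  simp [relEnt]

end RelEnt

/-- Klein's inequality: `D(ρ‖σ) ≥ 0`, with equality iff `ρ = σ`. -/
theorem klein_inequality {d : ℕ} (ρ σ : Matrix (Fin d) (Fin d) ℂ)
    (hρ : ρ.PosSemidef) (hρ1 : ρ.trace = 1)
    (hσ : σ.PosDef) (hσ1 : σ.trace = 1) :
    0 ≤ relEnt ρ σ ∧ (relEnt ρ σ = 0 ↔ ρ = σ) := by
  have htr : ρ.trace = σ.trace := hρ1.trans hσ1.symm
  exact ⟨relEnt_nonneg hρ hσ htr, eq_of_relEnt_eq_zero hρ hσ htr, fun h => h ▸ relEnt_self ρ⟩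
end

section
/- Environment-parametrized simulation collapses adaptive discrimination to measurement on environment states: for an environment-parametrized channel E^x(ρ) = F(ρ ⊗ θ^x) with fixed channel F, any two-step adaptive protocol consisting of input state ρ, channel use E^{x₁}, adaptive channel A, channel use E^{x₂}, and final POVM element Λ satisfies Tr[Λ (E^{x₂} ∘ A ∘ E^{x₁})(ρ)] = Tr[Γ (θ^{x₁} ⊗ θ^{x₂})] for a fixed operator 0 ≤ Γ ≤ I depending only on ρ, F, A, Λ (not on x₁, x₂). -/
open Matrix ComplexOrder

/-- Extension `id_R ⊗ Φ` of a map on matrices, acting blockwise on a bipartite system. -/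
noncomputable def tensorId {r n m : Type*} [Fintype r] [Fintype n] [Fintype m]
    (Φ : Matrix n n ℂ → Matrix m m ℂ) :
    Matrix (r × n) (r × n) ℂ → Matrix (r × m) (r × m) ℂ :=
  fun X => Matrix.of fun p q => Φ (Matrix.of fun a b => X (p.1, a) (q.1, b)) p.2 q.2

/-- A quantum channel: a linear, completely positive, trace-preserving map. -/
structure IsChannel {n m : Type*} [Fintype n] [Fintype m]
    (Φ : Matrix n n ℂ → Matrix m m ℂ) : Prop where
  map_add : ∀ X Y, Φ (X + Y) = Φ X + Φ Y
  map_smul : ∀ (c : ℂ) X, Φ (c • X) = c • Φ X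
  cp : ∀ (k : ℕ) (X : Matrix (Fin k × n) (Fin k × n) ℂ), X.PosSemidef →
    (tensorId Φ X).PosSemidef
  tp : ∀ X, (Φ X).trace = X.trace

open Kronecker

/-!
Replace the product `θ₁ ⊗ θ₂` of environment states by an arbitrary joint input `X` on `E ⊗ E`.
The protocol then becomes a linear map `Ψ : X ↦ (id ⊗ F)((id ⊗ A)((id ⊗ F)(X ⊗ ρ)))` (up to
reindexing), which is positive and trace preserving since `F` and `A` are completely positive and
trace preserving, and which agrees with the protocol on product inputs. Take `Γ = Ψ† Λ`, the adjoint
for the trace pairing: then `Tr[Γ X] = Tr[Λ Ψ X]`, positivity of `Ψ` gives `Γ ≥ 0`, and since `Ψ†`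
is unital, `I - Γ = Ψ† (I - Λ) ≥ 0`.
-/

namespace Matrix

variable {n m R : Type*} [Fintype m]

theorem PosSemidef.of_dotProduct_mulVec_nonneg_complex [DecidableEq m] {M : Matrix m m ℂ}
    (h : ∀ x, 0 ≤ star x ⬝ᵥ (M *ᵥ x)) : M.PosSemidef := by
  refine .of_dotProduct_mulVec_nonneg ?_ h
  rw [← isSymmetric_toEuclideanLin_iff, LinearMap.isSymmetric_iff_inner_map_self_real]
  intro x
  have hx := Complex.conj_eq_iff_im.mpr (Complex.nonneg_iff.mp (h x.ofLp)).2.symm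
  rw [EuclideanSpace.inner_eq_star_dotProduct, dotProduct_comm, ← star_star x.ofLp,
    star_dotProduct_star]
  exact congrArg star hx

theorem PosSemidef.trace_mul_nonneg {A B : Matrix m m ℂ} (hA : A.PosSemidef)
    (hB : B.PosSemidef) : 0 ≤ (A * B).trace := by
  obtain ⟨k, v, rfl⟩ := posSemidef_iff_eq_sum_vecMulVec.mp hA
  rw [Finset.sum_mul, trace_sum]
  refine Finset.sum_nonneg fun i _ => ?_
  rw [vecMulVec_mul, trace_vecMulVec, dotProduct_comm, ← dotProduct_mulVec]
  exact hB.dotProduct_mulVec_nonneg _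

/-- `Φ† Λ`, for the adjoint `Φ†` of `Φ` with respect to the pairing `⟨Λ, X⟩ = Tr (Λ X)`. -/
def traceDual [CommSemiring R] [DecidableEq n] (Φ : Matrix n n R →ₗ[R] Matrix m m R)
    (Λ : Matrix m m R) : Matrix n n R :=
  of fun p q => (Λ * Φ (single q p 1)).trace

theorem trace_traceDual_mul [CommSemiring R] [Fintype n] [DecidableEq n]
    (Φ : Matrix n n R →ₗ[R] Matrix m m R) (Λ : Matrix m m R) (X : Matrix n n R) :
    (traceDual Φ Λ * X).trace = (Λ * Φ X).trace := by
  induction X using Matrix.induction_on' with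
  | h_zero => simp
  | h_add X Y hX hY => rw [mul_add, trace_add, hX, hY, map_add, mul_add, trace_add]
  | h_std_basis i j c =>
    have hc : single i j c = c • single i j 1 := by rw [smul_single, smul_eq_mul, mul_one]
    rw [trace_mul_single, hc, map_smul, mul_smul_comm, trace_smul]
    simp [traceDual, mul_comm]

theorem traceDual_sub [CommRing R] [DecidableEq n] (Φ : Matrix n n R →ₗ[R] Matrix m m R)
    (Λ₁ Λ₂ : Matrix m m R) : traceDual Φ (Λ₁ - Λ₂) = traceDual Φ Λ₁ - traceDual Φ Λ₂ := by
  ext p q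
  simp [traceDual, sub_mul]

theorem traceDual_one [CommSemiring R] [Fintype n] [DecidableEq n] [DecidableEq m]
    {Φ : Matrix n n R →ₗ[R] Matrix m m R} (hΦ : ∀ X, (Φ X).trace = X.trace) :
    traceDual Φ 1 = 1 := by
  ext p q
  by_cases h : p = q
  · subst h; simp [traceDual, hΦ]
  · simp [traceDual, hΦ, trace_single_eq_of_ne _ _ _ (Ne.symm h), one_apply_ne h]

theorem posSemidef_traceDual [Fintype n] [DecidableEq n] {Φ : Matrix n n ℂ →ₗ[ℂ] Matrix m m ℂ}
    (hΦ : ∀ X, X.PosSemidef → (Φ X).PosSemidef) {Λ : Matrix m m ℂ} (hΛ : Λ.PosSemidef) :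
    (traceDual Φ Λ).PosSemidef := by
  refine .of_dotProduct_mulVec_nonneg_complex fun v => ?_
  have hv : star v ⬝ᵥ (traceDual Φ Λ *ᵥ v) = (traceDual Φ Λ * vecMulVec v (star v)).trace := by
    rw [mul_vecMulVec, trace_vecMulVec, dotProduct_comm]
  rw [hv, trace_traceDual_mul]
  exact hΛ.trace_mul_nonneg (hΦ _ (posSemidef_vecMulVec_self_star v))

end Matrix

section TensorId

variable {r r' n m : Type*} [Fintype r] [Fintype n] [Fintype m]
  {Φ : Matrix n n ℂ → Matrix m m ℂ}

theorem tensorId_submatrix_prodMap [Fintype r'] (σ : r' → r) (X : Matrix (r × n) (r × n) ℂ) :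
    tensorId Φ (X.submatrix (Prod.map σ id) (Prod.map σ id)) =
      (tensorId Φ X).submatrix (Prod.map σ id) (Prod.map σ id) :=
  rfl

theorem tensorId_kronecker {ι : Type*} [Fintype ι] (hΦ : ∀ (c : ℂ) X, Φ (c • X) = c • Φ X)
    (θ : Matrix ι ι ℂ) (M : Matrix n n ℂ) : tensorId Φ (θ ⊗ₖ M) = θ ⊗ₖ Φ M := by
  ext ⟨u, p⟩ ⟨v, q⟩
  simp only [tensorId, of_apply, kronecker_apply]
  rw [show (of fun a b => θ u v * M a b) = θ u v • M from rfl, hΦ]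
  rfl

theorem trace_tensorId (hΦ : ∀ X, (Φ X).trace = X.trace) (X : Matrix (r × n) (r × n) ℂ) :
    (tensorId Φ X).trace = X.trace := by
  simp only [trace, diag, tensorId, of_apply, Fintype.sum_prod_type]
  exact Finset.sum_congr rfl fun s _ => hΦ _

namespace IsChannel

variable (hΦ : IsChannel Φ)
include hΦ

theorem posSemidef_tensorId {X : Matrix (r × n) (r × n) ℂ} (hX : X.PosSemidef) :
    (tensorId Φ X).PosSemidef := by
  let σ := Fintype.equivFin r
  have h := hΦ.cp _ _ (hX.submatrix (Prod.map σ.symm id))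
  rw [tensorId_submatrix_prodMap] at h
  convert h.submatrix (Prod.map σ id) using 1
  ext ⟨s, a⟩ ⟨t, b⟩
  simp

@[simps]
noncomputable def tensorIdLinearMap :
    Matrix (r × n) (r × n) ℂ →ₗ[ℂ] Matrix (r × m) (r × m) ℂ where
  toFun := tensorId Φ
  map_add' X Y := by
    ext p q
    simp only [tensorId, of_apply, Matrix.add_apply]
    rw [← Matrix.add_apply, ← hΦ.map_add]
    rfl
  map_smul' c X := by
    ext p q
    simp only [tensorId, of_apply, Matrix.smul_apply, RingHom.id_apply]
    rw [← Matrix.smul_apply, ← hΦ.map_smul]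
    rfl

end IsChannel

end TensorId

section PositiveTracePreserving

variable {n m k : Type*} [Fintype n] [Fintype m] [Fintype k]

structure IsPositiveTracePreserving (Φ : Matrix n n ℂ →ₗ[ℂ] Matrix m m ℂ) : Prop where
  posSemidef : ∀ X, X.PosSemidef → (Φ X).PosSemidef
  trace : ∀ X, (Φ X).trace = X.trace

theorem IsPositiveTracePreserving.comp {Ψ : Matrix m m ℂ →ₗ[ℂ] Matrix k k ℂ}
    {Φ : Matrix n n ℂ →ₗ[ℂ] Matrix m m ℂ} (hΨ : IsPositiveTracePreserving Ψ)
    (hΦ : IsPositiveTracePreserving Φ) : IsPositiveTracePreserving (Ψ ∘ₗ Φ) :=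
  ⟨fun X hX => hΨ.posSemidef _ (hΦ.posSemidef X hX), fun X => (hΨ.trace _).trans (hΦ.trace X)⟩

theorem isPositiveTracePreserving_reindex (σ : m ≃ n) :
    IsPositiveTracePreserving (reindexLinearEquiv ℂ ℂ σ σ).toLinearMap where
  posSemidef X hX := hX.submatrix σ.symm
  trace X := by simp [trace, Equiv.sum_comp σ.symm fun i => X i i]

theorem isPositiveTracePreserving_flip_kroneckerBilinear {ρ : Matrix m m ℂ} (hρ : ρ.PosSemidef)
    (hρ1 : ρ.trace = 1) :
    IsPositiveTracePreserving ((kroneckerBilinear (R := ℂ) (l := n) (m := n)).flip ρ) where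
  posSemidef X hX := hX.kronecker hρ
  trace X := (trace_kronecker X ρ).trans (by rw [hρ1, mul_one])

theorem IsChannel.isPositiveTracePreserving_tensorIdLinearMap {r : Type*} [Fintype r]
    {Φ : Matrix n n ℂ → Matrix m m ℂ} (hΦ : IsChannel Φ) :
    IsPositiveTracePreserving (hΦ.tensorIdLinearMap (r := r)) :=
  ⟨fun _ => hΦ.posSemidef_tensorId, trace_tensorId hΦ.tp⟩

end PositiveTracePreserving

/-- `((u₁, u₂), (s, a)) ↦ ((u₂, s), (a, u₁))` -/
def firstUseShuffle (E R B' : Type*) : (E × E) × (R × B') ≃ (E × R) × (B' × E) :=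
  ((Equiv.prodComm E E).prodCongr (Equiv.refl _)).trans <|
    (Equiv.prodProdProdComm E E R B').trans ((Equiv.refl _).prodCongr (Equiv.prodComm E B'))

/-- `(u, (s, a)) ↦ (s, (a, u))` -/
def secondUseShuffle (E R B' : Type*) : E × (R × B') ≃ R × (B' × E) :=
  (Equiv.prodComm E (R × B')).trans (Equiv.prodAssoc R B' E)

section AdaptiveSimulation

variable {R B' B E : Type*} [Fintype R] [Fintype B'] [Fintype B] [Fintype E]
  {F : Matrix (B' × E) (B' × E) ℂ → Matrix B B ℂ}
  {A : Matrix (R × B) (R × B) ℂ → Matrix (R × B') (R × B') ℂ}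

/-- The protocol with the two environment states replaced by one joint input `X`:
`X ↦ (id_R ⊗ F)((id_{E₂} ⊗ A)((id_{E₂ R} ⊗ F)(X ⊗ ρ)))`, suitably reindexed. -/
noncomputable def adaptiveSimulation (hF : IsChannel F) (hA : IsChannel A)
    (ρ : Matrix (R × B') (R × B') ℂ) :
    Matrix (E × E) (E × E) ℂ →ₗ[ℂ] Matrix (R × B) (R × B) ℂ :=
  hF.tensorIdLinearMap ∘ₗ
    (reindexLinearEquiv ℂ ℂ (secondUseShuffle E R B') (secondUseShuffle E R B')).toLinearMap ∘ₗ
    hA.tensorIdLinearMap ∘ₗ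
    (reindexLinearEquiv ℂ ℂ (Equiv.prodAssoc E R B) (Equiv.prodAssoc E R B)).toLinearMap ∘ₗ
    hF.tensorIdLinearMap ∘ₗ
    (reindexLinearEquiv ℂ ℂ (firstUseShuffle E R B') (firstUseShuffle E R B')).toLinearMap ∘ₗ
    (kroneckerBilinear (R := ℂ)).flip ρ

theorem adaptiveSimulation_kronecker (hF : IsChannel F) (hA : IsChannel A)
    (ρ : Matrix (R × B') (R × B') ℂ) (θ₁ θ₂ : Matrix E E ℂ) :
    adaptiveSimulation hF hA ρ (θ₁ ⊗ₖ θ₂) =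
      tensorId (fun Y => F (Y ⊗ₖ θ₂)) (A (tensorId (fun Y => F (Y ⊗ₖ θ₁)) ρ)) := by
  have first_use : reindex (Equiv.prodAssoc E R B) (Equiv.prodAssoc E R B)
      (tensorId F (reindex (firstUseShuffle E R B') (firstUseShuffle E R B') ((θ₁ ⊗ₖ θ₂) ⊗ₖ ρ))) =
        θ₂ ⊗ₖ tensorId (fun Y => F (Y ⊗ₖ θ₁)) ρ := by
    ext ⟨u, s, β⟩ ⟨v, t, β'⟩
    simp only [reindex_apply, submatrix_apply, tensorId, of_apply, kroneckerMap_apply,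
      Equiv.prodAssoc_symm_apply]
    rw [← smul_eq_mul, ← Matrix.smul_apply, ← hF.map_smul]
    congr 2
    ext ⟨a, w⟩ ⟨a', w'⟩
    simp [firstUseShuffle]
    ring
  have second_use (M : Matrix (R × B') (R × B') ℂ) :
      tensorId F (reindex (secondUseShuffle E R B') (secondUseShuffle E R B') (θ₂ ⊗ₖ M)) =
        tensorId (fun Y => F (Y ⊗ₖ θ₂)) M := by
    ext ⟨s, β⟩ ⟨t, β'⟩
    simp only [reindex_apply, submatrix_apply, tensorId, of_apply]
    congr 2
    ext ⟨a, w⟩ ⟨a', w'⟩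
    simp [secondUseShuffle, mul_comm]
  simp only [adaptiveSimulation, LinearMap.comp_apply, LinearEquiv.coe_coe,
    coe_reindexLinearEquiv, IsChannel.tensorIdLinearMap_apply, LinearMap.flip_apply]
  rw [show kroneckerBilinear (R := ℂ) (θ₁ ⊗ₖ θ₂) ρ = (θ₁ ⊗ₖ θ₂) ⊗ₖ ρ from rfl, first_use,
    tensorId_kronecker hA.map_smul, second_use]

theorem isPositiveTracePreserving_adaptiveSimulation (hF : IsChannel F) (hA : IsChannel A)
    {ρ : Matrix (R × B') (R × B') ℂ} (hρ : ρ.PosSemidef) (hρ1 : ρ.trace = 1) :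
    IsPositiveTracePreserving (adaptiveSimulation (E := E) hF hA ρ) :=
  hF.isPositiveTracePreserving_tensorIdLinearMap.comp <|
    (isPositiveTracePreserving_reindex _).comp <|
    hA.isPositiveTracePreserving_tensorIdLinearMap.comp <|
    (isPositiveTracePreserving_reindex _).comp <|
    hF.isPositiveTracePreserving_tensorIdLinearMap.comp <|
    (isPositiveTracePreserving_reindex _).comp <|
    isPositiveTracePreserving_flip_kroneckerBilinear hρ hρ1

end AdaptiveSimulation

/-- for an environment-parametrized collection
`E^x(ρ) = F(ρ ⊗ θ^x)`, any two-step adaptive discrimination protocol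
(initial state `ρ`, channel use, adaptive channel `A`, channel use, POVM element `Λ`)
is simulated by a fixed measurement operator `Γ` on the environment states:
`Tr[Λ (E^{x₂} ∘ A ∘ E^{x₁})(ρ)] = Tr[Γ (θ^{x₁} ⊗ θ^{x₂})]` with `0 ≤ Γ ≤ I`,
where `Γ` depends only on `ρ, F, A, Λ`. -/
theorem env_parametrized_adaptive_reduction {r b' b e : ℕ}
    (F : Matrix (Fin b' × Fin e) (Fin b' × Fin e) ℂ → Matrix (Fin b) (Fin b) ℂ)
    (hF : IsChannel F)
    (A : Matrix (Fin r × Fin b) (Fin r × Fin b) ℂ →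
      Matrix (Fin r × Fin b') (Fin r × Fin b') ℂ)
    (hA : IsChannel A)
    (ρ : Matrix (Fin r × Fin b') (Fin r × Fin b') ℂ)
    (hρ : ρ.PosSemidef) (hρ1 : ρ.trace = 1)
    (Λ : Matrix (Fin r × Fin b) (Fin r × Fin b) ℂ)
    (hΛ : Λ.PosSemidef) (hΛI : (1 - Λ).PosSemidef) :
    ∃ Γ : Matrix (Fin e × Fin e) (Fin e × Fin e) ℂ,
      Γ.PosSemidef ∧ (1 - Γ).PosSemidef ∧
      ∀ θ₁ θ₂ : Matrix (Fin e) (Fin e) ℂ,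
        θ₁.PosSemidef → θ₁.trace = 1 → θ₂.PosSemidef → θ₂.trace = 1 →
        (Λ * tensorId (fun Y => F (Y ⊗ₖ θ₂))
              (A (tensorId (fun Y => F (Y ⊗ₖ θ₁)) ρ))).trace
          = (Γ * (θ₁ ⊗ₖ θ₂)).trace := by
  let Ψ := adaptiveSimulation (E := Fin e) hF hA ρ
  have hΨ : IsPositiveTracePreserving Ψ :=
    isPositiveTracePreserving_adaptiveSimulation hF hA hρ hρ1
  refine ⟨traceDual Ψ Λ, posSemidef_traceDual hΨ.posSemidef hΛ, ?_, fun θ₁ θ₂ _ _ _ _ => ?_⟩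
  · rw [← traceDual_one hΨ.trace, ← traceDual_sub]
    exact posSemidef_traceDual hΨ.posSemidef hΛI
  · rw [trace_traceDual_mul, adaptiveSimulation_kronecker]
end
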